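/- arXiv:1507.02955 — 3 statements merged into one kernel-verified Lean document; each statement's English description precedes it below -/
import Mathlib

section
/- If (λ, μ, π) is a simplex-like triple of partitions of n, then every point set P with marginals (λ^T, μ^T, π^T) satisfies P_r ⊆ P ⊊ P_{r+1} for some r ≥ 1; in particular P is a pyramid, and consequently k^λ_{μ,π} = t^λ_{μ,π} = p^λ_{μ,π}. -/
open CategoryTheory MonoidalCategory
open scoped TensorProduct

set_option synthInstance.maxHeartbeats 1000000
set_option maxHeartbeats 1000000
set_option maxRecDepth 4000

namespace KronPaper

noncomputable section

/-- The `x`-marginal of a point set `P ⊆ ℕ³`. -/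
def margX (P : Finset (ℕ × ℕ × ℕ)) (i : ℕ) : ℕ := (P.filter (fun p => p.1 = i)).card

/-- The `y`-marginal of a point set `P ⊆ ℕ³`. -/
def margY (P : Finset (ℕ × ℕ × ℕ)) (j : ℕ) : ℕ := (P.filter (fun p => p.2.1 = j)).card

/-- The `z`-marginal of a point set `P ⊆ ℕ³`. -/
def margZ (P : Finset (ℕ × ℕ × ℕ)) (k : ℕ) : ℕ := (P.filter (fun p => p.2.2 = k)).card

/-- `P` has marginals `(λᵀ, μᵀ, πᵀ)`, where the transpose is recorded via column lengths. -/
def HasMarginals (P : Finset (ℕ × ℕ × ℕ)) (l m q : YoungDiagram) : Prop :=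
  (∀ i, margX P i = l.colLen i) ∧ (∀ j, margY P j = m.colLen j) ∧ (∀ k, margZ P k = q.colLen k)

/-- A pyramid is a downward-closed point set in `ℕ³`. -/
def IsPyramid (P : Finset (ℕ × ℕ × ℕ)) : Prop :=
  ∀ x y z x' y' z', (x, y, z) ∈ P → x' ≤ x → y' ≤ y → z' ≤ z → (x', y', z') ∈ P

/-- `t^λ_{μ,π}`: the number of point sets with marginals `(λᵀ, μᵀ, πᵀ)`. -/
def tCount (l m q : YoungDiagram) : ℕ :=
  Nat.card {P : Finset (ℕ × ℕ × ℕ) // HasMarginals P l m q}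

/-- `p^λ_{μ,π}`: the number of pyramids with marginals `(λᵀ, μᵀ, πᵀ)`. -/
def pCount (l m q : YoungDiagram) : ℕ :=
  Nat.card {P : Finset (ℕ × ℕ × ℕ) // HasMarginals P l m q ∧ IsPyramid P}

abbrev Vr (r : ℕ) := Fin r → ℂ

/-- `(ℂ^r)^{⊗3}`. -/
abbrev T3 (r : ℕ) := Vr r ⊗[ℂ] (Vr r ⊗[ℂ] Vr r)

/-- The factorwise action of a triple of endomorphisms of `ℂ^r` on `(ℂ^r)^{⊗3}`. -/
def tripleEnd {r : ℕ} (f g h : Module.End ℂ (Vr r)) : Module.End ℂ (T3 r) :=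
  TensorProduct.map f (TensorProduct.map g h)

/-- The induced endomorphism of the exterior algebra of `(ℂ^r)^{⊗3}` (which restricts to every
exterior power `⋀ⁿ (ℂ^r)^{⊗3}`). -/
def extA {r : ℕ} (f : Module.End ℂ (T3 r)) :
    Module.End ℂ (ExteriorAlgebra ℂ (T3 r)) :=
  (ExteriorAlgebra.map f).toLinearMap

/-- The diagonal endomorphism of `ℂ^r` with entries `t`. -/
def diagEnd {r : ℕ} (t : Fin r → ℂ) : Module.End ℂ (Vr r) :=
  LinearMap.pi fun i => t i • LinearMap.proj i

/-- The weight space of weight `(w1, w2, w3)` for the torus of `GL(r)³`, inside the exterior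
algebra of `(ℂ^r)^{⊗3}` (to be intersected with `⋀ⁿ`). -/
def weightSpace (r : ℕ) (w1 w2 w3 : Fin r → ℕ) :
    Submodule ℂ (ExteriorAlgebra ℂ (T3 r)) where
  carrier := {v | ∀ t1 t2 t3 : Fin r → ℂ,
    extA (tripleEnd (diagEnd t1) (diagEnd t2) (diagEnd t3)) v
      = ((∏ i, t1 i ^ w1 i) * (∏ i, t2 i ^ w2 i) * (∏ i, t3 i ^ w3 i)) • v}
  add_mem' := by
    intro a b ha hb t1 t2 t3
    rw [map_add, ha t1 t2 t3, hb t1 t2 t3, smul_add]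
  zero_mem' := by intro t1 t2 t3; rw [map_zero, smul_zero]
  smul_mem' := by
    intro c a ha t1 t2 t3
    rw [map_smul, ha t1 t2 t3, smul_comm]

/-- Upper triangular with unit diagonal. -/
def IsUpperUnitriangular {r : ℕ} (u : Matrix (Fin r) (Fin r) ℂ) : Prop :=
  (∀ i, u i i = 1) ∧ ∀ i j : Fin r, (j : ℕ) < (i : ℕ) → u i j = 0

/-- Vectors invariant under the unipotent upper triangular subgroup of each `GL(r)` factor;
together with a weight condition this characterizes highest weight vectors. -/
def raisingInvariants (r : ℕ) : Submodule ℂ (ExteriorAlgebra ℂ (T3 r)) where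
  carrier := {v | ∀ u : Matrix (Fin r) (Fin r) ℂ, IsUpperUnitriangular u →
    extA (tripleEnd u.mulVecLin 1 1) v = v ∧
    extA (tripleEnd 1 u.mulVecLin 1) v = v ∧
    extA (tripleEnd 1 1 u.mulVecLin) v = v}
  add_mem' := by
    intro a b ha hb u hu
    obtain ⟨h1, h2, h3⟩ := ha u hu
    obtain ⟨g1, g2, g3⟩ := hb u hu
    exact ⟨by rw [map_add, h1, g1], by rw [map_add, h2, g2], by rw [map_add, h3, g3]⟩
  zero_mem' := by
    intro u hu
    exact ⟨map_zero _, map_zero _, map_zero _⟩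
  smul_mem' := by
    intro c a ha u hu
    obtain ⟨h1, h2, h3⟩ := ha u hu
    exact ⟨by rw [map_smul, h1], by rw [map_smul, h2], by rw [map_smul, h3]⟩

/-- The space of highest weight vectors of weight `(w1, w2, w3)` for `GL(r)³` inside
`⋀ⁿ((ℂ^r)^{⊗3})`.  Its dimension is the multiplicity of the irreducible `GL(r)³`-representation
`V_{w1} ⊗ V_{w2} ⊗ V_{w3}` in `⋀ⁿ((ℂ^r)^{⊗3})`. -/
def hwSpace (r n : ℕ) (w1 w2 w3 : Fin r → ℕ) :
    Submodule ℂ (ExteriorAlgebra ℂ (T3 r)) :=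
  weightSpace r w1 w2 w3 ⊓ raisingInvariants r ⊓ ⋀[ℂ]^n (T3 r)

/-- The Kronecker coefficient `k^λ_{μ,π}`, realized as the dimension of the space of highest
weight vectors of weight `(λᵀ, μᵀ, πᵀ)` for `GL(n)³` in `⋀ⁿ((ℂⁿ)^{⊗3})`, `n = |λ|`
(this equals the multiplicity of the Specht module `[λ]` in `[μ] ⊗ [π]`). -/
def kron (l m q : YoungDiagram) : ℕ :=
  Module.finrank ℂ (hwSpace l.card l.card
    (fun i => l.colLen i) (fun i => m.colLen i) (fun i => q.colLen i))

/-- The simplex `P_r = {(x,y,z) ∈ ℕ³ : x + y + z ≤ r − 1}` of side length `r`. -/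
def simplexN (r : ℕ) : Finset (ℕ × ℕ × ℕ) :=
  (Finset.range r ×ˢ (Finset.range r ×ˢ Finset.range r)).filter
    (fun p => p.1 + p.2.1 + p.2.2 + 1 ≤ r)

/-- `Σ_{(x,y,z) ∈ P} (x + y + z)`, the projection of the barycenter onto the diagonal. -/
def ssum (P : Finset (ℕ × ℕ × ℕ)) : ℕ := ∑ p ∈ P, (p.1 + p.2.1 + p.2.2)

/-- `p(n)` computed with respect to `r`:  the minimal possible value of `ssum` over `n`-element
point sets, when `|P_r| ≤ n < |P_{r+1}|`. -/
def pval (n r : ℕ) : ℕ := ssum (simplexN r) + r * (n - (simplexN r).card)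

/-- The largest `r` with `|P_r| ≤ n`. -/
def rIndex (n : ℕ) : ℕ := Nat.findGreatest (fun r => (simplexN r).card ≤ n) n

/-- `p(n)`: the minimal possible value of `Σ_{(x,y,z)∈P}(x+y+z)` over `n`-element point sets. -/
def pOfN (n : ℕ) : ℕ := pval n (rIndex n)

/-- `Σ_i i·λᵀ_i`. -/
def wsum (l : YoungDiagram) : ℕ := ∑ i ∈ Finset.range (l.rowLen 0), i * l.colLen i

/-- A triple of partitions of `n ≠ 0` is simplex-like if for some `r` all three have at most
`r + 1` columns and `Σ_i i·λᵀ_i + Σ_j j·μᵀ_j + Σ_k k·πᵀ_k = p(n)`. -/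
def SimplexLike (l m q : YoungDiagram) : Prop :=
  l.card ≠ 0 ∧ l.card = m.card ∧ l.card = q.card ∧
  (∃ r : ℕ, l.rowLen 0 ≤ r + 1 ∧ m.rowLen 0 ≤ r + 1 ∧ q.rowLen 0 ≤ r + 1) ∧
  wsum l + wsum m + wsum q = pOfN l.card

/-!
Every point set `P` with marginals `(λᵀ, μᵀ, πᵀ)` has the same value of
`ssum P = Σ_{p ∈ P} (x + y + z)`, namely `Σ i·λᵀ_i + Σ j·μᵀ_j + Σ k·πᵀ_k`. Trading the points
of an `n`-point set outside `P_r` for the holes of `P_r` shows that `ssum P ≥ p(n)`, with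
equality only if `P_r ⊆ P ⊆ P_{r+1}`, where `|P_r| ≤ n < |P_{r+1}|`. So for a simplex-like
triple every such `P` lies between two simplices, and is therefore a pyramid.

For `k = t`, the wedges `e_S` of `n` standard basis vectors `e_x ⊗ e_y ⊗ e_z` form a torus
weight basis of `⋀ⁿ((ℂⁿ)^{⊗3})`, and the weight space of weight `(λᵀ, μᵀ, πᵀ)` is spanned by
the `e_S` with `S` of marginals `(λᵀ, μᵀ, πᵀ)`. An upper unitriangular matrix sends `e_S` to
`e_S` plus wedges over point sets with smaller `ssum`. Since `ssum S = p(n)` is already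
minimal, those wedges vanish, so every weight vector is a highest weight vector.
-/

open Finset

def level (p : ℕ × ℕ × ℕ) : ℕ := p.1 + p.2.1 + p.2.2

lemma mem_simplexN {r : ℕ} {p : ℕ × ℕ × ℕ} : p ∈ simplexN r ↔ level p < r := by
  simp only [simplexN, level, mem_filter, mem_product, mem_range]
  omega

lemma ssum_eq_sum_level (P : Finset (ℕ × ℕ × ℕ)) : ssum P = ∑ p ∈ P, level p := rfl

theorem pval_add_card_sdiff_add_sum_le_ssum (P : Finset (ℕ × ℕ × ℕ)) (r : ℕ)
    (h : (simplexN r).card ≤ P.card) :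
    pval P.card r + (simplexN r \ P).card + ∑ p ∈ P \ simplexN r, (level p - r) ≤ ssum P := by
  rw [pval, ssum_eq_sum_level, ssum_eq_sum_level]
  set S := simplexN r
  have hP := sum_inter_add_sum_sdiff P S level
  have hS := sum_inter_add_sum_sdiff S P level
  have hholes : ∑ p ∈ S \ P, (level p + 1) ≤ (S \ P).card * r :=
    sum_le_card_nsmul _ _ _ fun p hp => mem_simplexN.1 (mem_sdiff.1 hp).1
  have hout : ∑ p ∈ P \ S, level p = (P \ S).card * r + ∑ p ∈ P \ S, (level p - r) := by
    rw [← smul_eq_mul, ← sum_const, ← sum_add_distrib]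
    refine sum_congr rfl fun p hp => ?_
    have := mem_simplexN.not.1 (mem_sdiff.1 hp).2
    omega
  have hcardP := card_inter_add_card_sdiff P S
  have hcardS := card_inter_add_card_sdiff S P
  rw [inter_comm] at hS hcardS
  have hmul : r * (P.card - S.card) + (S \ P).card * r = (P \ S).card * r := by
    rw [mul_comm r, ← add_mul]
    congr 1
    omega
  rw [sum_add_distrib, sum_const, smul_eq_mul, mul_one] at hholes
  omega

lemma pval_le_ssum (P : Finset (ℕ × ℕ × ℕ)) (r : ℕ) (h : (simplexN r).card ≤ P.card) :
    pval P.card r ≤ ssum P :=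
  le_trans (by omega) (pval_add_card_sdiff_add_sum_le_ssum P r h)

lemma subset_of_ssum_eq_pval (P : Finset (ℕ × ℕ × ℕ)) (r : ℕ)
    (h : (simplexN r).card ≤ P.card) (heq : ssum P = pval P.card r) :
    simplexN r ⊆ P ∧ P ⊆ simplexN (r + 1) := by
  have hle := pval_add_card_sdiff_add_sum_le_ssum P r h
  have hholes : (simplexN r \ P).card = 0 := by omega
  have hexcess : ∑ p ∈ P \ simplexN r, (level p - r) = 0 := by omega
  refine ⟨sdiff_eq_empty_iff_subset.1 (card_eq_zero.1 hholes), fun p hp => ?_⟩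
  by_cases hpS : p ∈ simplexN r
  · exact mem_simplexN.2 (Nat.lt_succ_of_lt (mem_simplexN.1 hpS))
  · have := sum_eq_zero_iff.1 hexcess p (mem_sdiff.2 ⟨hp, hpS⟩)
    exact mem_simplexN.2 (by omega)

lemma le_card_simplexN (r : ℕ) : r ≤ (simplexN r).card := by
  simpa using card_le_card_of_injOn (s := range r) (fun k => ((0 : ℕ), (0 : ℕ), k))
    (fun k hk => mem_simplexN.2 (by simpa [level] using hk)) (fun _ _ _ _ h => by simpa using h)

lemma card_simplexN_one : (simplexN 1).card = 1 := by decide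

section rIndex

variable {n : ℕ}

lemma one_le_rIndex (hn : n ≠ 0) : 1 ≤ rIndex n :=
  Nat.le_findGreatest (by omega) (by rw [card_simplexN_one]; omega)

lemma card_simplexN_rIndex_le (hn : n ≠ 0) : (simplexN (rIndex n)).card ≤ n :=
  Nat.findGreatest_spec (P := fun r => (simplexN r).card ≤ n) (m := 1) (by omega)
    (by rw [card_simplexN_one]; omega)

lemma lt_card_simplexN_rIndex_succ : n < (simplexN (rIndex n + 1)).card := by
  by_cases h : rIndex n + 1 ≤ n
  · exact not_le.1 (Nat.findGreatest_is_greatest (P := fun r => (simplexN r).card ≤ n)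
      (Nat.lt_succ_self _) h)
  · have := le_card_simplexN (rIndex n + 1)
    omega

end rIndex

lemma isPyramid_of_simplexN_subset_of_subset {r : ℕ} {P : Finset (ℕ × ℕ × ℕ)}
    (h₁ : simplexN r ⊆ P) (h₂ : P ⊆ simplexN (r + 1)) : IsPyramid P := by
  intro x y z x' y' z' hP hx hy hz
  have hlevel : level (x, y, z) < r + 1 := mem_simplexN.1 (h₂ hP)
  by_cases hlt : x' + y' + z' < x + y + z
  · exact h₁ (mem_simplexN.2 (by simp only [level] at *; omega))
  · obtain ⟨rfl, rfl, rfl⟩ : x' = x ∧ y' = y ∧ z' = z := by omega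
    exact hP

section Fibers

variable {α : Type*} {s : Finset α} {f : α → ℕ} {l : YoungDiagram}

lemma colLen_eq_zero_of_rowLen_le {i : ℕ} (h : l.rowLen 0 ≤ i) : l.colLen i = 0 := by
  by_contra hi
  have := YoungDiagram.mem_iff_lt_rowLen.1
    (YoungDiagram.mem_iff_lt_colLen.2 (Nat.pos_of_ne_zero hi))
  omega

lemma rowLen_zero_le_card (l : YoungDiagram) : l.rowLen 0 ≤ l.card := by
  rw [YoungDiagram.rowLen_eq_card]
  exact card_filter_le _ _

lemma sum_range_colLen {M : ℕ} (h : l.rowLen 0 ≤ M) :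
    ∑ i ∈ range M, l.colLen i = l.card := by
  have hmaps : ∀ c ∈ l.cells, c.2 ∈ range M := fun c hc => mem_range.2
    ((YoungDiagram.mem_iff_lt_rowLen.1 (l.up_left_mem (Nat.zero_le c.1) le_rfl hc)).trans_le h)
  rw [YoungDiagram.card, card_eq_sum_card_fiberwise hmaps]
  exact sum_congr rfl fun i _ => YoungDiagram.colLen_eq_card l

lemma lt_rowLen_of_card_fiber_eq (hf : ∀ i, #{a ∈ s | f a = i} = l.colLen i) {a : α}
    (ha : a ∈ s) : f a < l.rowLen 0 := by
  by_contra hle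
  have hpos : 0 < #{x ∈ s | f x = f a} := card_pos.2 ⟨a, mem_filter.2 ⟨ha, rfl⟩⟩
  rw [hf, colLen_eq_zero_of_rowLen_le (not_lt.1 hle)] at hpos
  exact lt_irrefl 0 hpos

lemma card_eq_of_card_fiber_eq (hf : ∀ i, #{a ∈ s | f a = i} = l.colLen i) :
    s.card = l.card := by
  rw [card_eq_sum_card_fiberwise (t := range (l.rowLen 0))
    fun a ha => mem_range.2 (lt_rowLen_of_card_fiber_eq hf ha), ← sum_range_colLen le_rfl]
  exact sum_congr rfl fun i _ => hf i

lemma sum_eq_wsum_of_card_fiber_eq (hf : ∀ i, #{a ∈ s | f a = i} = l.colLen i) :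
    ∑ a ∈ s, f a = wsum l := by
  rw [← sum_fiberwise_of_maps_to (t := range (l.rowLen 0))
    fun a ha => mem_range.2 (lt_rowLen_of_card_fiber_eq hf ha), wsum]
  refine sum_congr rfl fun i _ => ?_
  rw [sum_congr rfl fun a ha => (mem_filter.1 ha).2, sum_const, hf, smul_eq_mul, mul_comm]

end Fibers

namespace HasMarginals

variable {P : Finset (ℕ × ℕ × ℕ)} {l m q : YoungDiagram}

lemma card_eq (hP : HasMarginals P l m q) : P.card = l.card := card_eq_of_card_fiber_eq hP.1

lemma ssum_eq (hP : HasMarginals P l m q) : ssum P = wsum l + wsum m + wsum q := by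
  rw [ssum, sum_add_distrib, sum_add_distrib, sum_eq_wsum_of_card_fiber_eq hP.1,
    sum_eq_wsum_of_card_fiber_eq hP.2.1, sum_eq_wsum_of_card_fiber_eq hP.2.2]

end HasMarginals

theorem mem_span_image_of_forall_eigen {K M ι α : Type*} [Field K] [AddCommGroup M]
    [Module K M] [Fintype ι] {e : ι → M} (he : LinearIndependent K e)
    {T : α → Module.End K M} {c : α → ι → K} (hT : ∀ a i, T a (e i) = c a i • e i)
    {μ : α → K} {v : M} (hv : v ∈ Submodule.span K (Set.range e))
    (hTv : ∀ a, T a v = μ a • v) :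
    v ∈ Submodule.span K (e '' {i | ∀ a, c a i = μ a}) := by
  obtain ⟨g, rfl⟩ := (Submodule.mem_span_range_iff_exists_fun K).1 hv
  have hg : ∀ i a, c a i ≠ μ a → g i = 0 := by
    intro i a hne
    have hzero : ∑ j, (g j * (c a j - μ a)) • e j = 0 := by
      have := hTv a
      simp only [map_sum, map_smul, hT, smul_smul, Finset.smul_sum] at this
      simp only [mul_sub, sub_smul, Finset.sum_sub_distrib, this, mul_comm (μ a), sub_self]
    exact (mul_eq_zero.1 (Fintype.linearIndependent_iff.1 he _ hzero i)).resolve_right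
      (sub_ne_zero.2 hne)
  refine Submodule.sum_mem _ fun i _ => ?_
  by_cases hi : ∀ a, c a i = μ a
  · exact Submodule.smul_mem _ _ (Submodule.subset_span ⟨i, hi, rfl⟩)
  · obtain ⟨a, ha⟩ := not_forall.1 hi
    rw [hg i a ha, zero_smul]
    exact Submodule.zero_mem _

section Wedge

open ExteriorAlgebra Set.powersetCard

variable {R M I : Type*} [CommRing R] [AddCommGroup M] [Module R M] [LinearOrder I] {n : ℕ}

lemma prod_ofFinEmbEquiv_symm {β : Type*} [CommMonoid β] (s : Set.powersetCard I n)
    (f : I → β) : ∏ j, f (ofFinEmbEquiv.symm s j) = ∏ i ∈ s.val, f i := by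
  conv_rhs => rw [← map_orderEmbOfFin_univ s.val s.prop, prod_map]
  rfl

lemma sum_ofFinEmbEquiv_symm {β : Type*} [AddCommMonoid β] (s : Set.powersetCard I n)
    (f : I → β) : ∑ j, f (ofFinEmbEquiv.symm s j) = ∑ i ∈ s.val, f i := by
  conv_rhs => rw [← map_orderEmbOfFin_univ s.val s.prop, sum_map]
  rfl

theorem map_ιMulti_family_of_eigen (b : Module.Basis I R M) {f : M →ₗ[R] M}
    {c : I → R} (hf : ∀ i, f (b i) = c i • b i) (s : Set.powersetCard I n) :
    map f (ιMulti_family R n b s) = (∏ i ∈ s.val, c i) • ιMulti_family R n b s := by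
  rw [ιMulti_family, map_apply_ιMulti, ← prod_ofFinEmbEquiv_symm,
    ← AlternatingMap.map_smul_univ]
  congr 1
  funext j
  exact hf _

theorem map_ιMulti_family_eq_self_of_unitriangular [Fintype I] (b : Module.Basis I R M)
    (w : I → ℕ) {f : M →ₗ[R] M} (hdiag : ∀ i, b.repr (f (b i)) i = 1)
    (hlower : ∀ i j, j ≠ i → b.repr (f (b i)) j ≠ 0 → w j < w i)
    (s : Set.powersetCard I n)
    (hmin : ∀ t : Finset I, t.card = n → ∑ i ∈ s.val, w i ≤ ∑ i ∈ t, w i) :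
    map f (ιMulti_family R n b s) = ιMulti_family R n b s := by
  classical
  set e := ofFinEmbEquiv.symm s
  have hexpand : f ∘ b ∘ e = fun k => ∑ j, b.repr (f (b (e k))) j • b j :=
    funext fun k => (b.sum_repr _).symm
  rw [ιMulti_family, map_apply_ιMulti, hexpand, ← AlternatingMap.coe_multilinearMap,
    MultilinearMap.map_sum, sum_eq_single (e : Fin n → I)]
  · simp only [hdiag, one_smul]
    rfl
  · intro τ _ hτ
    rw [MultilinearMap.map_smul_univ]
    by_cases hzero : ∃ k, b.repr (f (b (e k))) (τ k) = 0
    · obtain ⟨k, hk⟩ := hzero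
      rw [prod_eq_zero (mem_univ k) hk, zero_smul]
    push Not at hzero
    by_cases hinj : Function.Injective τ
    · -- the wedge of `b ∘ τ` would have smaller total weight than the minimal `s`
      have hle : ∀ k, w (τ k) ≤ w (e k) := fun k => by
        by_cases h : τ k = e k
        · rw [h]
        · exact (hlower _ _ h (hzero k)).le
      obtain ⟨k₀, hk₀⟩ := Function.ne_iff.1 hτ
      have hlt : ∑ k, w (τ k) < ∑ k, w (e k) :=
        sum_lt_sum (fun k _ => hle k) ⟨k₀, mem_univ _, hlower _ _ hk₀ (hzero k₀)⟩
      have hτmin := hmin (univ.image τ)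
        (by rw [card_image_of_injective _ hinj, card_univ, Fintype.card_fin])
      rw [sum_image fun _ _ _ _ h => hinj h, ← sum_ofFinEmbEquiv_symm] at hτmin
      exact absurd hτmin (not_le.2 hlt)
    · rw [AlternatingMap.coe_multilinearMap, AlternatingMap.map_eq_zero_of_not_injective _
        (fun i => b (τ i)) fun h => hinj (h.of_comp (f := b)), smul_zero]
  · exact fun h => absurd (mem_univ _) h

end Wedge

abbrev Cube (r : ℕ) := Fin r × Fin r × Fin r

def cubeEmb (r : ℕ) : Cube r ↪ ℕ × ℕ × ℕ :=
  ⟨fun s => (s.1, s.2.1, s.2.2), fun s t h => by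
    simp only [Prod.mk.injEq] at h
    exact Prod.ext (Fin.ext h.1) (Prod.ext (Fin.ext h.2.1) (Fin.ext h.2.2))⟩

def cubeBasis (r : ℕ) : Module.Basis (Cube r) ℂ (T3 r) :=
  (Pi.basisFun ℂ (Fin r)).tensorProduct
    ((Pi.basisFun ℂ (Fin r)).tensorProduct (Pi.basisFun ℂ (Fin r)))

section Cube

variable {r : ℕ}

@[simp]
lemma level_cubeEmb (s : Cube r) : level (cubeEmb r s) = s.1 + s.2.1 + s.2.2 := rfl

lemma cubeBasis_apply (s : Cube r) :
    cubeBasis r s =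
      Pi.single s.1 1 ⊗ₜ[ℂ] (Pi.single s.2.1 1 ⊗ₜ[ℂ] Pi.single s.2.2 1) := by
  simp [cubeBasis, Module.Basis.tensorProduct_apply']

lemma cubeBasis_repr_tripleEnd (f g h : Module.End ℂ (Vr r)) (s t : Cube r) :
    (cubeBasis r).repr (tripleEnd f g h (cubeBasis r s)) t =
      f.toMatrix' t.1 s.1 * (g.toMatrix' t.2.1 s.2.1 * h.toMatrix' t.2.2 s.2.2) := by
  rw [cubeBasis_apply, tripleEnd, TensorProduct.map_tmul, TensorProduct.map_tmul, cubeBasis,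
    Module.Basis.tensorProduct_repr_tmul_apply, Module.Basis.tensorProduct_repr_tmul_apply]
  simp only [Pi.basisFun_repr, LinearMap.toMatrix'_apply]
  ring

lemma tripleEnd_diagEnd_cubeBasis (t₁ t₂ t₃ : Fin r → ℂ) (s : Cube r) :
    tripleEnd (diagEnd t₁) (diagEnd t₂) (diagEnd t₃) (cubeBasis r s) =
      (t₁ s.1 * t₂ s.2.1 * t₃ s.2.2) • cubeBasis r s := by
  have hsingle (t : Fin r → ℂ) (i : Fin r) :
      diagEnd t (Pi.single i 1) = t i • Pi.single i 1 := by
    ext j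
    by_cases h : j = i <;> simp [diagEnd, h]
  simp only [cubeBasis_apply, tripleEnd, TensorProduct.map_tmul, hsingle,
    TensorProduct.tmul_smul, ← TensorProduct.smul_tmul', smul_smul]
  congr 1
  ring

end Cube

section Raising

open ExteriorAlgebra

variable {r n : ℕ}

lemma IsUpperUnitriangular.one : IsUpperUnitriangular (1 : Matrix (Fin r) (Fin r) ℂ) :=
  ⟨fun _ => Matrix.one_apply_eq _, fun _ _ h => Matrix.one_apply_ne (Fin.ne_of_val_ne h.ne')⟩

lemma IsUpperUnitriangular.le_of_ne_zero {u : Matrix (Fin r) (Fin r) ℂ}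
    (hu : IsUpperUnitriangular u) {i j : Fin r} (h : u i j ≠ 0) : (i : ℕ) ≤ j :=
  not_lt.1 fun hlt => h (hu.2 i j hlt)

lemma extA_tripleEnd_ιMulti_family [LinearOrder (Cube r)] {f g h : Module.End ℂ (Vr r)}
    (hf : IsUpperUnitriangular f.toMatrix') (hg : IsUpperUnitriangular g.toMatrix')
    (hh : IsUpperUnitriangular h.toMatrix') (S : Set.powersetCard (Cube r) n)
    (hmin : ∀ T : Finset (Cube r), T.card = n →
      ∑ s ∈ S.val, level (cubeEmb r s) ≤ ∑ s ∈ T, level (cubeEmb r s)) :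
    extA (tripleEnd f g h) (ιMulti_family ℂ n (cubeBasis r) S) =
      ιMulti_family ℂ n (cubeBasis r) S := by
  refine map_ιMulti_family_eq_self_of_unitriangular _ _ (fun s => ?_)
    (fun s t hts hne => ?_) S hmin
  · rw [cubeBasis_repr_tripleEnd, hf.1, hg.1, hh.1, one_mul, one_mul]
  · rw [cubeBasis_repr_tripleEnd] at hne
    have h₁ := hf.le_of_ne_zero (left_ne_zero_of_mul hne)
    have h₂ := hg.le_of_ne_zero (left_ne_zero_of_mul (right_ne_zero_of_mul hne))
    have h₃ := hh.le_of_ne_zero (right_ne_zero_of_mul (right_ne_zero_of_mul hne))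
    rw [level_cubeEmb, level_cubeEmb]
    by_contra hle
    exact hts (Prod.ext (Fin.ext (by omega)) (Prod.ext (Fin.ext (by omega)) (Fin.ext (by omega))))

lemma ιMulti_family_mem_raisingInvariants [LinearOrder (Cube r)]
    (S : Set.powersetCard (Cube r) n)
    (hmin : ∀ T : Finset (Cube r), T.card = n →
      ∑ s ∈ S.val, level (cubeEmb r s) ≤ ∑ s ∈ T, level (cubeEmb r s)) :
    ιMulti_family ℂ n (cubeBasis r) S ∈ raisingInvariants r := by
  intro u hu
  have hu' : IsUpperUnitriangular (Matrix.mulVecLin u).toMatrix' := by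
    rwa [← Matrix.toLin'_apply', LinearMap.toMatrix'_toLin']
  have h1 : IsUpperUnitriangular (1 : Module.End ℂ (Vr r)).toMatrix' := by
    rw [LinearMap.toMatrix'_one]
    exact .one
  exact ⟨extA_tripleEnd_ιMulti_family hu' h1 h1 S hmin,
    extA_tripleEnd_ιMulti_family h1 hu' h1 S hmin,
    extA_tripleEnd_ιMulti_family h1 h1 hu' S hmin⟩

end Raising

section Weights

open ExteriorAlgebra

variable {r n : ℕ}

def HasCubeMarginals (S : Finset (Cube r)) (w₁ w₂ w₃ : Fin r → ℕ) : Prop :=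
  (∀ i, #{s ∈ S | s.1 = i} = w₁ i) ∧ (∀ i, #{s ∈ S | s.2.1 = i} = w₂ i) ∧
    ∀ i, #{s ∈ S | s.2.2 = i} = w₃ i

lemma prod_comp_eq_prod_pow_card_filter {α ι M : Type*} [Fintype ι] [DecidableEq ι]
    [CommMonoid M] (S : Finset α) (g : α → ι) (t : ι → M) :
    ∏ a ∈ S, t (g a) = ∏ i, t i ^ #{a ∈ S | g a = i} := by
  rw [← prod_fiberwise_of_maps_to (g := g) (t := univ) (fun _ _ => mem_univ _)]
  refine prod_congr rfl fun i _ => ?_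
  rw [prod_congr rfl fun a ha => by rw [(mem_filter.1 ha).2], prod_const]

lemma eq_of_forall_prod_pow_eq {ι : Type*} [Fintype ι] [DecidableEq ι] {a b : ι → ℕ}
    (h : ∀ t : ι → ℂ, ∏ i, t i ^ a i = ∏ i, t i ^ b i) : a = b := by
  funext i
  have hprod (e : ι → ℕ) :
      ∏ j, Function.update (fun _ => (1 : ℂ)) i 2 j ^ e j = 2 ^ e i := by
    rw [prod_eq_single i (fun j _ hj => by rw [Function.update_of_ne hj, one_pow])
      (fun h => absurd (mem_univ i) h), Function.update_self]
  have h2 := h (Function.update (fun _ => 1) i 2)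
  rw [hprod, hprod] at h2
  exact Nat.pow_right_injective le_rfl (by exact_mod_cast h2)

lemma forall_prod_torus_eq_iff (S : Finset (Cube r)) (w₁ w₂ w₃ : Fin r → ℕ) :
    (∀ t₁ t₂ t₃ : Fin r → ℂ, ∏ s ∈ S, (t₁ s.1 * t₂ s.2.1 * t₃ s.2.2) =
      (∏ i, t₁ i ^ w₁ i) * (∏ i, t₂ i ^ w₂ i) * (∏ i, t₃ i ^ w₃ i)) ↔
      HasCubeMarginals S w₁ w₂ w₃ := by
  have hchar (t₁ t₂ t₃ : Fin r → ℂ) : ∏ s ∈ S, (t₁ s.1 * t₂ s.2.1 * t₃ s.2.2) =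
      (∏ i, t₁ i ^ #{s ∈ S | s.1 = i}) * (∏ i, t₂ i ^ #{s ∈ S | s.2.1 = i}) *
        ∏ i, t₃ i ^ #{s ∈ S | s.2.2 = i} := by
    rw [prod_mul_distrib, prod_mul_distrib, prod_comp_eq_prod_pow_card_filter S (·.1),
      prod_comp_eq_prod_pow_card_filter S (·.2.1), prod_comp_eq_prod_pow_card_filter S (·.2.2)]
  simp only [hchar]
  constructor
  · intro h
    refine ⟨congrFun (eq_of_forall_prod_pow_eq fun t => ?_),
      congrFun (eq_of_forall_prod_pow_eq fun t => ?_),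
      congrFun (eq_of_forall_prod_pow_eq fun t => ?_)⟩
    · simpa using h t 1 1
    · simpa using h 1 t 1
    · simpa using h 1 1 t
  · rintro ⟨h₁, h₂, h₃⟩ t₁ t₂ t₃
    simp only [h₁, h₂, h₃]

lemma hwSpace_eq_span [LinearOrder (Cube r)] (w₁ w₂ w₃ : Fin r → ℕ)
    (hmin : ∀ S : Set.powersetCard (Cube r) n, HasCubeMarginals S.val w₁ w₂ w₃ →
      ∀ T : Finset (Cube r), T.card = n →
        ∑ s ∈ S.val, level (cubeEmb r s) ≤ ∑ s ∈ T, level (cubeEmb r s)) :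
    hwSpace r n w₁ w₂ w₃ = Submodule.span ℂ
      (ιMulti_family ℂ n (cubeBasis r) '' {S | HasCubeMarginals S.val w₁ w₂ w₃}) := by
  have htorus (t₁ t₂ t₃ : Fin r → ℂ) (S : Set.powersetCard (Cube r) n) :
      extA (tripleEnd (diagEnd t₁) (diagEnd t₂) (diagEnd t₃))
          (ιMulti_family ℂ n (cubeBasis r) S) =
        (∏ s ∈ S.val, (t₁ s.1 * t₂ s.2.1 * t₃ s.2.2)) •
          ιMulti_family ℂ n (cubeBasis r) S :=
    map_ιMulti_family_of_eigen _ (tripleEnd_diagEnd_cubeBasis t₁ t₂ t₃) S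
  apply le_antisymm
  · rintro v ⟨⟨hweight, -⟩, hdeg⟩
    rw [← exteriorPower.ιMulti_family_span_fixedDegree_of_span ℂ (cubeBasis r).span_eq] at hdeg
    have := mem_span_image_of_forall_eigen
      (exteriorPower.ιMulti_family_linearIndependent_ofBasis ℂ n (cubeBasis r) |>.map'
        _ (Submodule.ker_subtype _))
      (T := fun t : (Fin r → ℂ) × (Fin r → ℂ) × (Fin r → ℂ) =>
        extA (tripleEnd (diagEnd t.1) (diagEnd t.2.1) (diagEnd t.2.2)))
      (fun t S => htorus t.1 t.2.1 t.2.2 S) hdeg (fun t => hweight t.1 t.2.1 t.2.2)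
    simp only [Prod.forall, forall_prod_torus_eq_iff] at this
    exact this
  · rw [Submodule.span_le]
    rintro _ ⟨S, hS, rfl⟩
    refine ⟨⟨fun t₁ t₂ t₃ => ?_, ιMulti_family_mem_raisingInvariants S (hmin S hS)⟩,
      ιMulti_range ℂ n ⟨_, rfl⟩⟩
    rw [htorus, (forall_prod_torus_eq_iff S.val w₁ w₂ w₃).2 hS]

lemma finrank_hwSpace (w₁ w₂ w₃ : Fin r → ℕ)
    (hcard : ∀ S : Finset (Cube r), HasCubeMarginals S w₁ w₂ w₃ → S.card = n)
    (hmin : ∀ S : Finset (Cube r), HasCubeMarginals S w₁ w₂ w₃ →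
      ∀ T : Finset (Cube r), T.card = n →
        ∑ s ∈ S, level (cubeEmb r s) ≤ ∑ s ∈ T, level (cubeEmb r s)) :
    Module.finrank ℂ (hwSpace r n w₁ w₂ w₃) =
      Nat.card {S : Finset (Cube r) // HasCubeMarginals S w₁ w₂ w₃} := by
  classical
  -- any linear order will do: it only fixes the sign of each wedge
  let _ : LinearOrder (Cube r) := linearOrderOfSTO WellOrderingRel
  have hli : LinearIndependent ℂ (ιMulti_family ℂ n (cubeBasis r)) :=
    (exteriorPower.ιMulti_family_linearIndependent_ofBasis ℂ n (cubeBasis r)).map'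
      _ (Submodule.ker_subtype _)
  rw [hwSpace_eq_span w₁ w₂ w₃ fun S hS => hmin S.val hS, Set.image_eq_range]
  refine (finrank_span_eq_card (hli.comp _ Subtype.val_injective)).trans ?_
  rw [Fintype.card_eq_nat_card]
  exact Nat.card_congr
    { toFun := fun S => ⟨S.1.1, S.2⟩
      invFun := fun S => ⟨⟨S.1, hcard S.1 S.2⟩, S.2⟩ }

end Weights

section CubeCount

variable {r : ℕ} {l m q : YoungDiagram}

lemma forall_card_filter_val_eq_iff {S : Finset (Cube r)} {g : Cube r → Fin r}
    (hl : l.rowLen 0 ≤ r) :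
    (∀ i : ℕ, #{s ∈ S | (g s : ℕ) = i} = l.colLen i) ↔
      ∀ i : Fin r, #{s ∈ S | g s = i} = l.colLen i := by
  constructor
  · intro h i
    simpa only [Fin.val_inj] using h i
  · intro h i
    by_cases hi : i < r
    · simpa only [Fin.ext_iff] using h ⟨i, hi⟩
    · rw [colLen_eq_zero_of_rowLen_le (by omega), card_eq_zero, filter_eq_empty_iff]
      exact fun s _ hs => hi (hs ▸ (g s).isLt)

lemma hasMarginals_map_cubeEmb_iff (hl : l.rowLen 0 ≤ r) (hm : m.rowLen 0 ≤ r)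
    (hq : q.rowLen 0 ≤ r) (S : Finset (Cube r)) :
    HasMarginals (S.map (cubeEmb r)) l m q ↔
      HasCubeMarginals S (fun i => l.colLen i) (fun i => m.colLen i) (fun i => q.colLen i) := by
  simp only [HasMarginals, margX, margY, margZ, filter_map, card_map]
  exact and_congr (forall_card_filter_val_eq_iff hl) <|
    and_congr (forall_card_filter_val_eq_iff hm) (forall_card_filter_val_eq_iff hq)

lemma tCount_eq_card_hasCubeMarginals (hl : l.rowLen 0 ≤ r) (hm : m.rowLen 0 ≤ r)
    (hq : q.rowLen 0 ≤ r) :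
    tCount l m q = Nat.card {S : Finset (Cube r) //
      HasCubeMarginals S (fun i => l.colLen i) (fun i => m.colLen i) (fun i => q.colLen i)} := by
  have hbij : Function.Bijective
      fun S : {S : Finset (Cube r) // HasMarginals (S.map (cubeEmb r)) l m q} =>
        (⟨S.1.map (cubeEmb r), S.2⟩ : {P // HasMarginals P l m q}) := by
    refine ⟨fun S T h => Subtype.ext (map_injective _ (congrArg Subtype.val h)), ?_⟩
    rintro ⟨P, hP⟩
    have hsub : P ⊆ univ.map (cubeEmb r) := fun p hp =>
      mem_map.2 ⟨(⟨p.1, (lt_rowLen_of_card_fiber_eq hP.1 hp).trans_le hl⟩,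
        ⟨p.2.1, (lt_rowLen_of_card_fiber_eq hP.2.1 hp).trans_le hm⟩,
        ⟨p.2.2, (lt_rowLen_of_card_fiber_eq hP.2.2 hp).trans_le hq⟩), mem_univ _, rfl⟩
    obtain ⟨S, -, rfl⟩ := subset_map_iff.1 hsub
    exact ⟨⟨S, hP⟩, rfl⟩
  rw [tCount, ← Nat.card_congr (Equiv.ofBijective _ hbij)]
  exact Nat.card_congr (Equiv.subtypeEquivRight (hasMarginals_map_cubeEmb_iff hl hm hq))

end CubeCount

namespace SimplexLike

variable {l m q : YoungDiagram}

lemma simplexN_subset_and_ssubset (h : SimplexLike l m q) {P : Finset (ℕ × ℕ × ℕ)}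
    (hP : HasMarginals P l m q) :
    simplexN (rIndex l.card) ⊆ P ∧ P ⊂ simplexN (rIndex l.card + 1) := by
  obtain ⟨h₁, h₂⟩ := subset_of_ssum_eq_pval P (rIndex l.card)
    (by rw [hP.card_eq]; exact card_simplexN_rIndex_le h.1)
    (by rw [hP.ssum_eq, h.2.2.2.2, hP.card_eq, pOfN])
  refine ⟨h₁, h₂.ssubset_of_ne fun heq => ?_⟩
  exact (lt_card_simplexN_rIndex_succ (n := l.card)).ne (by rw [← heq, hP.card_eq])

lemma kron_eq_tCount (h : SimplexLike l m q) : kron l m q = tCount l m q := by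
  obtain ⟨hn, hlm, hlq, -, hsum⟩ := h
  have hl := rowLen_zero_le_card l
  have hm : m.rowLen 0 ≤ l.card := hlm ▸ rowLen_zero_le_card m
  have hq : q.rowLen 0 ≤ l.card := hlq ▸ rowLen_zero_le_card q
  have hmap := hasMarginals_map_cubeEmb_iff hl hm hq
  rw [kron, tCount_eq_card_hasCubeMarginals hl hm hq]
  refine finrank_hwSpace _ _ _ (fun S hS => ?_) (fun S hS T hT => ?_)
  · rw [← card_map (cubeEmb _), ((hmap S).2 hS).card_eq]
  · calc ∑ s ∈ S, level (cubeEmb _ s) = pOfN l.card := by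
          rw [← sum_map, ← ssum_eq_sum_level, ((hmap S).2 hS).ssum_eq, hsum]
      _ ≤ ∑ s ∈ T, level (cubeEmb _ s) := by
          have hle := pval_le_ssum (T.map (cubeEmb _)) (rIndex l.card)
            (by rw [card_map, hT]; exact card_simplexN_rIndex_le hn)
          rwa [card_map, hT, ssum_eq_sum_level, sum_map] at hle

end SimplexLike

/-- If `(λ, μ, π)` is a simplex-like triple of partitions of `n`, then every
point set `P` with marginals `(λᵀ, μᵀ, πᵀ)` satisfies `P_r ⊆ P ⊊ P_{r+1}` for some `r ≥ 1`; in
particular `P` is a pyramid, and consequently `k^λ_{μ,π} = t^λ_{μ,π} = p^λ_{μ,π}`. -/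
theorem simplexLike_pyramid_and_kron_eq
    (l m q : YoungDiagram) (h : SimplexLike l m q) :
    (∀ P : Finset (ℕ × ℕ × ℕ), HasMarginals P l m q →
      ∃ r : ℕ, 1 ≤ r ∧ simplexN r ⊆ P ∧ P ⊂ simplexN (r + 1)) ∧
    (∀ P : Finset (ℕ × ℕ × ℕ), HasMarginals P l m q → IsPyramid P) ∧
    kron l m q = tCount l m q ∧ tCount l m q = pCount l m q := by
  have hsandwich P (hP : HasMarginals P l m q) := h.simplexN_subset_and_ssubset hP
  have hpyramid P (hP : HasMarginals P l m q) : IsPyramid P :=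
    isPyramid_of_simplexN_subset_of_subset (hsandwich P hP).1 (hsandwich P hP).2.subset
  exact ⟨fun P hP => ⟨rIndex l.card, one_le_rIndex h.1, hsandwich P hP⟩, hpyramid,
    h.kron_eq_tCount, Nat.card_congr (Equiv.subtypeEquivRight fun P =>
      (and_iff_left_of_imp (hpyramid P)).symm)⟩

end
end KronPaper
end

section
/- Fix c ∈ ℕ. If λ, μ, π are partitions of the same size n with ht(λ), ht(μ), ht(π) ≤ c and n ≥ (c+2)c, then t^λ_{μ,π} > 0. -/
/-!
Cut `[0, n)` into consecutive blocks whose sizes are the column lengths of `μ`, and likewise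
for `λ` and `π`; the witness is the image of `t ↦ (λ-block of ρ t, μ-block of t, π-block of t)`
for a permutation `ρ` of `[0, n)`. This image has the prescribed marginals as soon as the map is
injective, and injectivity involves only the first two coordinates. Two points of the same block are less
than `c` apart, so it suffices that `ρ` sends any two distinct points less than `c` apart to
points at least `c` apart. Writing `[0, n)` row by row into a grid of width `c + 1` and reading
it column by column does this: its columns have length at least `c` because `c (c + 1) ≤ n`.
-/

open CategoryTheory MonoidalCategory
open scoped TensorProduct

set_option synthInstance.maxHeartbeats 1000000
set_option maxHeartbeats 1000000
set_option maxRecDepth 4000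

namespace KronPaper

noncomputable section

open Finset

section Blocks

variable (d : YoungDiagram)

def colPrefix (i : ℕ) : ℕ := ∑ j ∈ range i, d.colLen j

/-- Listing the cells of `d` column by column, the `t`-th cell lies in column `colBlock d t`. -/
def colBlock (t : ℕ) : ℕ := sInf {i | t < colPrefix d (i + 1)}

lemma colPrefix_mono : Monotone (colPrefix d) := fun _ _ h =>
  sum_le_sum_of_subset (range_subset_range.2 h)

lemma colPrefix_succ (i : ℕ) : colPrefix d (i + 1) = colPrefix d i + d.colLen i :=
  sum_range_succ _ _

lemma colPrefix_of_rowLen_le {N : ℕ} (hN : d.rowLen 0 ≤ N) : colPrefix d N = d.card := by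
  have hmaps : (d.cells : Set (ℕ × ℕ)).MapsTo Prod.snd (range N) := fun c hc => by
    have : c.2 < d.rowLen c.1 := YoungDiagram.mem_iff_lt_rowLen.1 hc
    have := d.rowLen_anti 0 c.1 c.1.zero_le
    simp only [coe_range, Set.mem_Iio]
    omega
  rw [YoungDiagram.card, card_eq_sum_card_fiberwise hmaps, colPrefix]
  exact sum_congr rfl fun j _ => d.colLen_eq_card

lemma colPrefix_le_card (i : ℕ) : colPrefix d i ≤ d.card :=
  (colPrefix_mono d (le_max_left i (d.rowLen 0))).trans_eq
    (colPrefix_of_rowLen_le d (le_max_right _ _))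

variable {d}

lemma colBlock_eq_iff {t i : ℕ} (ht : t < d.card) :
    colBlock d t = i ↔ colPrefix d i ≤ t ∧ t < colPrefix d (i + 1) := by
  have hne : {i | t < colPrefix d (i + 1)}.Nonempty :=
    ⟨d.rowLen 0, by rwa [Set.mem_ofPred_eq, colPrefix_of_rowLen_le d (Nat.le_succ _)]⟩
  have hmem : t < colPrefix d (colBlock d t + 1) := Nat.sInf_mem hne
  constructor
  · rintro rfl
    refine ⟨?_, hmem⟩
    rcases h : colBlock d t with _ | j
    · simp [colPrefix]
    · have hj : j < colBlock d t := h ▸ j.lt_succ_self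
      have := Nat.notMem_of_lt_sInf (s := {i | t < colPrefix d (i + 1)}) hj
      simpa using this
  · rintro ⟨h1, h2⟩
    refine le_antisymm (Nat.sInf_le h2) (not_lt.1 fun hlt => ?_)
    have := colPrefix_mono d (Nat.succ_le_of_lt hlt)
    exact absurd (hmem.trans_le this) (not_lt.2 h1)

lemma filter_colBlock_eq (i : ℕ) :
    {t ∈ range d.card | colBlock d t = i} = Ico (colPrefix d i) (colPrefix d (i + 1)) := by
  ext t
  simp only [mem_filter, mem_range, mem_Ico]
  constructor
  · rintro ⟨ht, hi⟩
    exact (colBlock_eq_iff ht).1 hi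
  · rintro hti
    have ht : t < d.card := hti.2.trans_le (colPrefix_le_card d _)
    exact ⟨ht, (colBlock_eq_iff ht).2 hti⟩

lemma card_filter_colBlock_eq (i : ℕ) :
    #{t ∈ range d.card | colBlock d t = i} = d.colLen i := by
  rw [filter_colBlock_eq, Nat.card_Ico, colPrefix_succ]
  omega

lemma lt_add_colLen_zero_of_colBlock_eq {t t' : ℕ} (ht : t < d.card) (ht' : t' < d.card)
    (h : colBlock d t = colBlock d t') : t' < t + d.colLen 0 := by
  obtain ⟨h1, -⟩ := (colBlock_eq_iff ht).1 rfl
  obtain ⟨-, h2⟩ := (colBlock_eq_iff ht').1 h.symm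
  have := d.colLen_anti 0 (colBlock d t) (Nat.zero_le _)
  rw [colPrefix_succ] at h2
  omega

end Blocks

section GridTranspose

variable {n w : ℕ}

/-- The number of `s < n` with `s % w < r`. -/
def colStart (n w r : ℕ) : ℕ := min r (n % w) + r * (n / w)

/-- Lay out `[0, n)` row by row in a grid of width `w`; then `gridTranspose n w t` is the
position of `t` when the grid is read column by column. -/
def gridTranspose (n w t : ℕ) : ℕ := colStart n w (t % w) + t / w

lemma colStart_add_mul_le {r r' : ℕ} (a : ℕ) (h : r + a ≤ r') :
    colStart n w r + a * (n / w) ≤ colStart n w r' := by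
  have := Nat.mul_le_mul_right (n / w) h
  rw [add_mul] at this
  unfold colStart
  omega

lemma colStart_self (hw : 0 < w) : colStart n w w = n := by
  have := Nat.mod_lt n hw
  have := Nat.mod_add_div n w
  unfold colStart
  omega

lemma gridTranspose_lt_colStart (hw : 0 < w) {t : ℕ} (ht : t < n) :
    gridTranspose n w t < colStart n w (t % w + 1) := by
  have ht_div := Nat.mod_add_div t w
  have hn_div := Nat.mod_add_div n w
  have := Nat.mod_lt t hw
  unfold gridTranspose colStart
  rw [add_one_mul]
  rcases (Nat.div_le_div_right (c := w) ht.le).lt_or_eq with hj | hj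
  · omega
  · rw [hj] at ht_div
    omega

lemma gridTranspose_lt (hw : 0 < w) {t : ℕ} (ht : t < n) : gridTranspose n w t < n := by
  have := Nat.mod_lt t hw
  calc gridTranspose n w t < colStart n w (t % w + 1) := gridTranspose_lt_colStart hw ht
    _ ≤ colStart n w w := by simpa using colStart_add_mul_le (n := n) 0 this
    _ = n := colStart_self hw

lemma gridTranspose_lt_of_mod_lt (hw : 0 < w) {t t' : ℕ} (ht : t < n) (h : t % w < t' % w) :
    gridTranspose n w t < gridTranspose n w t' :=
  calc gridTranspose n w t < colStart n w (t % w + 1) := gridTranspose_lt_colStart hw ht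
    _ ≤ colStart n w (t' % w) := by simpa using colStart_add_mul_le (n := n) 0 h
    _ ≤ gridTranspose n w t' := Nat.le_add_right _ _

lemma gridTranspose_injOn (hw : 0 < w) : Set.InjOn (gridTranspose n w) (range n) := by
  intro t ht t' ht' h
  rw [coe_range, Set.mem_Iio] at ht ht'
  have hmod : t % w = t' % w := by
    by_contra hne
    rcases Nat.lt_or_gt_of_ne hne with hlt | hlt
    · exact (gridTranspose_lt_of_mod_lt hw ht hlt).ne h
    · exact (gridTranspose_lt_of_mod_lt hw ht' hlt).ne h.symm
  have hdiv : t / w = t' / w := by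
    unfold gridTranspose at h
    rw [hmod] at h
    omega
  rw [← Nat.mod_add_div t w, ← Nat.mod_add_div t' w, hmod, hdiv]

lemma image_gridTranspose_range (hw : 0 < w) : (range n).image (gridTranspose n w) = range n :=
  eq_of_subset_of_card_le
    (image_subset_iff.2 fun _ ht => mem_range.2 (gridTranspose_lt hw (mem_range.1 ht)))
    (card_image_of_injOn (gridTranspose_injOn hw)).ge

lemma gridTranspose_separated {c t t' : ℕ} (hcw : c < w) (hk : c ≤ n / w) (htt' : t < t')
    (ht't : t' < t + c) :
    gridTranspose n w t + c ≤ gridTranspose n w t' ∨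
      gridTranspose n w t' + c ≤ gridTranspose n w t := by
  have ht_div := Nat.mod_add_div t w
  have ht'_div := Nat.mod_add_div t' w
  have := Nat.mod_lt t (c.zero_le.trans_lt hcw)
  have := Nat.mod_lt t' (c.zero_le.trans_lt hcw)
  have hj : t / w ≤ t' / w := Nat.div_le_div_right htt'.le
  have hj' : t' / w ≤ t / w + 1 := by
    rw [← Nat.add_div_right t (c.zero_le.trans_lt hcw)]
    exact Nat.div_le_div_right (by omega)
  unfold gridTranspose
  rcases hj.eq_or_lt with hj | hj
  · rw [← hj] at ht'_div
    have := colStart_add_mul_le (n := n) (w := w) 1 (show t % w + 1 ≤ t' % w by omega)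
    omega
  · rw [show t' / w = t / w + 1 by omega, mul_add_one] at ht'_div
    have := colStart_add_mul_le (n := n) (w := w) 2 (show t' % w + 2 ≤ t % w by omega)
    omega

lemma gridTranspose_eq_of_near {c t t' : ℕ} (hcw : c < w) (hk : c ≤ n / w)
    (h₁ : t' < t + c) (h₂ : t < t' + c)
    (h₃ : gridTranspose n w t' < gridTranspose n w t + c)
    (h₄ : gridTranspose n w t < gridTranspose n w t' + c) : t = t' := by
  rcases lt_trichotomy t t' with hlt | heq | hlt
  · have := gridTranspose_separated hcw hk hlt h₁
    omega
  · exact heq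
  · have := gridTranspose_separated hcw hk hlt h₂
    omega

end GridTranspose

lemma card_filter_image_of_injOn {α β : Type*} [DecidableEq β] {s : Finset α} {f : α → β}
    (hf : Set.InjOn f s) (p : β → Prop) [DecidablePred p] :
    #{y ∈ s.image f | p y} = #{x ∈ s | p (f x)} := by
  rw [filter_image, card_image_of_injOn (hf.mono (coe_subset.2 (filter_subset _ _)))]

section Marginals

variable {P : Finset (ℕ × ℕ × ℕ)} {l m q : YoungDiagram}

lemma lt_rowLen_zero_of_card_filter {α : Type*} {d : YoungDiagram} {s : Finset α} {f : α → ℕ}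
    {a : α} (ha : a ∈ s) (h : #{x ∈ s | f x = f a} = d.colLen (f a)) : f a < d.rowLen 0 := by
  have : 0 < d.colLen (f a) := h ▸ card_pos.2 ⟨a, mem_filter.2 ⟨ha, rfl⟩⟩
  exact YoungDiagram.mem_iff_lt_rowLen.1 (YoungDiagram.mem_iff_lt_colLen.2 this)

lemma HasMarginals.subset_box (h : HasMarginals P l m q) :
    P ⊆ range (l.rowLen 0) ×ˢ range (m.rowLen 0) ×ˢ range (q.rowLen 0) := fun a ha => by
  simp only [mem_product, mem_range]
  exact ⟨lt_rowLen_zero_of_card_filter ha (h.1 _),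
    lt_rowLen_zero_of_card_filter (f := fun x : ℕ × ℕ × ℕ => x.2.1) ha (h.2.1 a.2.1),
    lt_rowLen_zero_of_card_filter (f := fun x : ℕ × ℕ × ℕ => x.2.2) ha (h.2.2 a.2.2)⟩

lemma tCount_pos_of_hasMarginals (h : HasMarginals P l m q) : 0 < tCount l m q := by
  have : Finite {P // HasMarginals P l m q} :=
    (Set.Finite.subset (finite_toSet _) fun _ hQ =>
      mem_powerset.2 (HasMarginals.subset_box hQ)).to_subtype
  have : Nonempty {P // HasMarginals P l m q} := ⟨⟨P, h⟩⟩
  exact Nat.card_pos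

theorem exists_hasMarginals {c n : ℕ} (hl : l.card = n) (hm : m.card = n) (hq : q.card = n)
    (hhl : l.colLen 0 ≤ c) (hhm : m.colLen 0 ≤ c) (hn : c * (c + 1) ≤ n) :
    ∃ P, HasMarginals P l m q := by
  have hw : 0 < c + 1 := c.succ_pos
  have hk : c ≤ n / (c + 1) := (Nat.le_div_iff_mul_le hw).2 hn
  let ψ : ℕ → ℕ × ℕ × ℕ := fun t =>
    (colBlock l (gridTranspose n (c + 1) t), colBlock m t, colBlock q t)
  have hψ : Set.InjOn ψ (range n) := by
    intro t ht t' ht' h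
    simp only [ψ, Prod.mk.injEq] at h
    rw [coe_range, Set.mem_Iio] at ht ht'
    have hρt := gridTranspose_lt hw ht
    have hρt' := gridTranspose_lt hw ht'
    have h₁ := lt_add_colLen_zero_of_colBlock_eq (hm ▸ ht) (hm ▸ ht') h.2.1
    have h₂ := lt_add_colLen_zero_of_colBlock_eq (hm ▸ ht') (hm ▸ ht) h.2.1.symm
    have h₃ := lt_add_colLen_zero_of_colBlock_eq (hl ▸ hρt) (hl ▸ hρt') h.1
    have h₄ := lt_add_colLen_zero_of_colBlock_eq (hl ▸ hρt') (hl ▸ hρt) h.1.symm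
    exact gridTranspose_eq_of_near (lt_add_one c) hk (by omega) (by omega) (by omega) (by omega)
  refine ⟨(range n).image ψ, fun i => ?_, fun j => ?_, fun k => ?_⟩
  · rw [margX, card_filter_image_of_injOn hψ]
    change #{t ∈ range n | colBlock l (gridTranspose n (c + 1) t) = i} = _
    rw [← card_filter_image_of_injOn (gridTranspose_injOn hw) (colBlock l · = i),
      image_gridTranspose_range hw, ← hl, card_filter_colBlock_eq]
  · rw [margY, card_filter_image_of_injOn hψ, ← hm, card_filter_colBlock_eq]
  · rw [margZ, card_filter_image_of_injOn hψ, ← hq, card_filter_colBlock_eq]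

end Marginals

theorem tCount_pos_of_bounded_height_general
    (c n : ℕ) (l m q : YoungDiagram)
    (hl : l.card = n) (hm : m.card = n) (hq : q.card = n)
    (hhl : l.colLen 0 ≤ c) (hhm : m.colLen 0 ≤ c)
    (hn : (c + 2) * c ≤ n) :
    0 < tCount l m q :=
  have ⟨_, hP⟩ := exists_hasMarginals hl hm hq hhl hhm (le_trans (by nlinarith) hn)
  tCount_pos_of_hasMarginals hP

/-- Fix `c ∈ ℕ`.  If `λ, μ, π` are partitions of the same size `n` with
heights at most `c`, and `n ≥ (c + 2)·c`, then `t^λ_{μ,π} > 0`. -/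
theorem tCount_pos_of_bounded_height
    (c n : ℕ) (l m q : YoungDiagram)
    (hl : l.card = n) (hm : m.card = n) (hq : q.card = n)
    (hhl : l.colLen 0 ≤ c) (hhm : m.colLen 0 ≤ c) (hhq : q.colLen 0 ≤ c)
    (hn : (c + 2) * c ≤ n) :
    0 < tCount l m q :=
  tCount_pos_of_bounded_height_general c n l m q hl hm hq hhl hhm hn

end
end KronPaper
end

section
/- Let λ be a partition of dr with ht(λ) ≤ min(d², r²), and let δ = (d, d, …, d) (r copies). Then t^λ_{δ,δ} > 0. -/
/-! Number the cells of `λ` column by column with `0, …, d r - 1` and send the cell numbered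
`t = d a + s` (`s < d`) to the point `(column, s, s + a mod d)`. The pair `(s, s + a mod d)`
determines `t` mod `d²`, and a column has at most `d²` cells, so distinct cells give distinct
points. Every block of `d` consecutive numbers takes each value of `s` and of `s + a mod d` in
`{0, …, d - 1}` exactly once, so both of the other marginals are `r` on `{0, …, d - 1}`: those
of `δ`. -/

open CategoryTheory MonoidalCategory
open scoped TensorProduct

set_option synthInstance.maxHeartbeats 1000000
set_option maxHeartbeats 1000000
set_option maxRecDepth 4000

lemma Finset.card_filter_image_of_injOn {α β : Type*} [DecidableEq β] {s : Finset α} {f : α → β}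
    (hf : Set.InjOn f s) (p : β → Prop) [DecidablePred p] :
    ((s.image f).filter p).card = (s.filter fun a => p (f a)).card := by
  rw [Finset.filter_image, Finset.card_image_of_injOn (hf.mono (Finset.filter_subset _ s))]

namespace YoungDiagram

lemma colLen_le_colLen_zero (μ : YoungDiagram) (j : ℕ) : μ.colLen j ≤ μ.colLen 0 :=
  μ.colLen_anti 0 j j.zero_le

lemma lt_rowLen_zero_of_colLen_pos {μ : YoungDiagram} {j : ℕ} (h : 0 < μ.colLen j) :
    j < μ.rowLen 0 :=
  mem_iff_lt_rowLen.1 (mem_iff_lt_colLen.2 h)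

lemma colLen_eq_ite_of_rowLen_eq_ite {μ : YoungDiagram} {d r : ℕ}
    (hμ : ∀ i, μ.rowLen i = if i < r then d else 0) (j : ℕ) :
    μ.colLen j = if j < d then r else 0 := by
  refine eq_of_forall_lt_iff fun i => ?_
  rw [← mem_iff_lt_colLen, mem_iff_lt_rowLen, hμ]
  split_ifs <;> omega

def colStart (μ : YoungDiagram) (j : ℕ) : ℕ := ∑ i ∈ Finset.range j, μ.colLen i

def cellIndex (μ : YoungDiagram) (c : ℕ × ℕ) : ℕ := μ.colStart c.2 + c.1

lemma colStart_mono (μ : YoungDiagram) : Monotone μ.colStart := fun _ _ h =>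
  Finset.sum_le_sum_of_subset (Finset.range_subset_range.2 h)

lemma colStart_succ (μ : YoungDiagram) (j : ℕ) : μ.colStart (j + 1) = μ.colStart j + μ.colLen j :=
  Finset.sum_range_succ _ _

lemma colStart_eq_card_filter (μ : YoungDiagram) (j : ℕ) :
    μ.colStart j = (μ.cells.filter fun c => c.2 < j).card := by
  classical
  rw [Finset.card_eq_sum_card_fiberwise (f := Prod.snd) (t := Finset.range j)
    fun c hc => Finset.mem_range.2 (Finset.mem_filter.1 hc).2]
  refine Finset.sum_congr rfl fun i hi => ?_
  rw [colLen_eq_card, col, Finset.filter_filter]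
  have hij := Finset.mem_range.1 hi
  exact congrArg Finset.card (Finset.filter_congr fun c _ => ⟨fun h => ⟨h ▸ hij, h⟩, And.right⟩)

lemma colStart_le_card (μ : YoungDiagram) (j : ℕ) : μ.colStart j ≤ μ.card :=
  (μ.colStart_eq_card_filter j).trans_le (Finset.card_filter_le μ.cells _)

lemma cellIndex_lt_card {μ : YoungDiagram} {c : ℕ × ℕ} (hc : c ∈ μ.cells) :
    μ.cellIndex c < μ.card := by
  have := mem_iff_lt_colLen.1 hc
  have := μ.colStart_le_card (c.2 + 1)
  rw [colStart_succ] at this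
  unfold cellIndex
  omega

lemma cellIndex_lt_cellIndex {μ : YoungDiagram} {c c' : ℕ × ℕ} (hc : c ∈ μ.cells)
    (h : c.2 < c'.2) : μ.cellIndex c < μ.cellIndex c' := by
  have := mem_iff_lt_colLen.1 hc
  have := μ.colStart_mono (Nat.succ_le_of_lt h)
  rw [colStart_succ] at this
  unfold cellIndex
  omega

lemma injOn_cellIndex (μ : YoungDiagram) : Set.InjOn μ.cellIndex μ.cells := by
  intro c hc c' hc' h
  rcases lt_trichotomy c.2 c'.2 with hlt | heq | hgt
  · exact absurd h (cellIndex_lt_cellIndex hc hlt).ne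
  · unfold cellIndex at h
    rw [heq] at h
    exact Prod.ext (by omega) heq
  · exact absurd h (cellIndex_lt_cellIndex hc' hgt).ne'

lemma image_cellIndex (μ : YoungDiagram) : μ.cells.image μ.cellIndex = Finset.range μ.card := by
  refine Finset.eq_of_subset_of_card_le ?_ ?_
  · intro t ht
    obtain ⟨c, hc, rfl⟩ := Finset.mem_image.1 ht
    exact Finset.mem_range.2 (cellIndex_lt_card hc)
  · rw [Finset.card_range, Finset.card_image_of_injOn μ.injOn_cellIndex]

lemma card_filter_cellIndex (μ : YoungDiagram) (p : ℕ → Prop) [DecidablePred p] :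
    (μ.cells.filter fun c => p (μ.cellIndex c)).card = ((Finset.range μ.card).filter p).card := by
  rw [← μ.image_cellIndex, Finset.card_filter_image_of_injOn μ.injOn_cellIndex]

end YoungDiagram

namespace KronPaper

def latinCell (d t : ℕ) : ℕ × ℕ := (t % d, (t % d + t / d) % d)

lemma modEq_of_latinCell_eq {d t t' : ℕ} (h : latinCell d t = latinCell d t') :
    t ≡ t' [MOD d * d] := by
  obtain ⟨hrow, hcol⟩ := Prod.mk.inj h
  rw [hrow] at hcol
  have hdiv : t / d % d = t' / d % d := Nat.ModEq.add_left_cancel' _ hcol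
  rw [Nat.ModEq, Nat.mod_mul, Nat.mod_mul, hrow, hdiv]

lemma card_filter_add_mod_eq (a : ℕ) {d k : ℕ} (hk : k < d) :
    ((Finset.range d).filter fun s => (s + a) % d = k).card = 1 := by
  have hd : 0 < d := by omega
  set w := (k + (d - a % d)) % d
  have hw : (w + a) % d = k := by
    have := Nat.mod_add_div a d
    have := Nat.mod_lt a hd
    rw [Nat.mod_add_mod, show k + (d - a % d) + a = k + d * (a / d + 1) by grind,
      Nat.add_mul_mod_self_left, Nat.mod_eq_of_lt hk]
  refine Finset.card_eq_one.2 ⟨w, Finset.ext fun s => ?_⟩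
  simp only [Finset.mem_filter, Finset.mem_range, Finset.mem_singleton]
  constructor
  · rintro ⟨hs, hsk⟩
    exact Nat.ModEq.eq_of_lt_of_lt
      (Nat.ModEq.add_right_cancel' a (hsk.trans hw.symm)) hs (Nat.mod_lt _ hd)
  · rintro rfl
    exact ⟨Nat.mod_lt _ hd, hw⟩

lemma card_filter_range_mul_mod_add_eq (σ : ℕ → ℕ) (d r k : ℕ) :
    ((Finset.range (d * r)).filter fun t => (t % d + σ (t / d)) % d = k).card =
      if k < d then r else 0 := by
  split_ifs with hk
  · induction r with
    | zero => simp
    | succ r ih =>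
      have hd : 0 < d := by omega
      rw [Finset.card_filter] at ih ⊢
      rw [Nat.mul_succ, Finset.sum_range_add, ih, ← Finset.card_filter,
        ← card_filter_add_mod_eq (σ r) hk]
      refine congrArg (fun n => r + n) (congrArg Finset.card (Finset.filter_congr fun s hs => ?_))
      rw [Nat.mul_add_mod, Nat.mul_add_div hd, Nat.div_eq_of_lt (Finset.mem_range.1 hs),
        Nat.mod_eq_of_lt (Finset.mem_range.1 hs), add_zero]
  · refine Finset.card_eq_zero.2 (Finset.filter_eq_empty_iff.2 fun t ht => ?_)
    have hd : 0 < d := Nat.pos_of_mul_pos_right (Finset.mem_range.1 ht |>.trans_le' t.zero_le)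
    have := Nat.mod_lt (t % d + σ (t / d)) hd
    omega

lemma card_filter_latinCell_fst (d r j : ℕ) :
    ((Finset.range (d * r)).filter fun t => (latinCell d t).1 = j).card =
      if j < d then r else 0 := by
  simpa [latinCell] using card_filter_range_mul_mod_add_eq 0 d r j

lemma card_filter_latinCell_snd (d r k : ℕ) :
    ((Finset.range (d * r)).filter fun t => (latinCell d t).2 = k).card =
      if k < d then r else 0 :=
  card_filter_range_mul_mod_add_eq id d r k

def latinPoint (l : YoungDiagram) (d : ℕ) (c : ℕ × ℕ) : ℕ × ℕ × ℕ :=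
  (c.2, latinCell d (l.cellIndex c))

def latinPointSet (l : YoungDiagram) (d : ℕ) : Finset (ℕ × ℕ × ℕ) :=
  l.cells.image (latinPoint l d)

lemma injOn_latinPoint {l : YoungDiagram} {d : ℕ} (hl : l.colLen 0 ≤ d * d) :
    Set.InjOn (latinPoint l d) l.cells := by
  intro c hc c' hc' h
  obtain ⟨hcol, hcell⟩ := Prod.mk.inj h
  have hmod := modEq_of_latinCell_eq hcell
  rw [YoungDiagram.cellIndex, YoungDiagram.cellIndex, hcol] at hmod
  have hlt : ∀ c ∈ l.cells, c.1 < d * d := fun c hc =>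
    (YoungDiagram.mem_iff_lt_colLen.1 hc).trans_le ((l.colLen_le_colLen_zero _).trans hl)
  exact Prod.ext ((Nat.ModEq.add_left_cancel' _ hmod).eq_of_lt_of_lt (hlt c hc) (hlt c' hc')) hcol

lemma hasMarginals_latinPointSet {l δ : YoungDiagram} {d r : ℕ} (hcard : l.card = d * r)
    (hl : l.colLen 0 ≤ d * d) (hδ : ∀ j, δ.colLen j = if j < d then r else 0) :
    HasMarginals (latinPointSet l d) l δ δ := by
  have hfilter : ∀ (p : ℕ × ℕ × ℕ → Prop) [DecidablePred p],
      ((latinPointSet l d).filter p).card = (l.cells.filter fun c => p (latinPoint l d c)).card :=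
    fun p _ => Finset.card_filter_image_of_injOn (injOn_latinPoint hl) p
  refine ⟨fun i => ?_, fun j => ?_, fun k => ?_⟩
  · rw [margX, hfilter, YoungDiagram.colLen_eq_card, YoungDiagram.col]
    rfl
  · rw [margY, hfilter, hδ, ← card_filter_latinCell_fst d r j, ← hcard]
    exact l.card_filter_cellIndex fun t => (latinCell d t).1 = j
  · rw [margZ, hfilter, hδ, ← card_filter_latinCell_snd d r k, ← hcard]
    exact l.card_filter_cellIndex fun t => (latinCell d t).2 = k

lemma finite_setOf_hasMarginals (l m q : YoungDiagram) :
    {P | HasMarginals P l m q}.Finite := by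
  let box := Finset.range (l.rowLen 0) ×ˢ Finset.range (m.rowLen 0) ×ˢ Finset.range (q.rowLen 0)
  refine box.powerset.finite_toSet.subset fun P ⟨hX, hY, hZ⟩ => ?_
  rw [Finset.mem_coe, Finset.mem_powerset]
  intro p hp
  simp only [box, Finset.mem_product, Finset.mem_range]
  refine ⟨?_, ?_, ?_⟩ <;> apply YoungDiagram.lt_rowLen_zero_of_colLen_pos
  · exact hX p.1 ▸ Finset.card_pos.2 ⟨p, Finset.mem_filter.2 ⟨hp, rfl⟩⟩
  · exact hY p.2.1 ▸ Finset.card_pos.2 ⟨p, Finset.mem_filter.2 ⟨hp, rfl⟩⟩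
  · exact hZ p.2.2 ▸ Finset.card_pos.2 ⟨p, Finset.mem_filter.2 ⟨hp, rfl⟩⟩

/-- Let `λ` be a partition of `d·r` with `ht(λ) ≤ min(d², r²)`, and let
`δ = (d, …, d)` (`r` copies).  Then `t^λ_{δ,δ} > 0`. -/
theorem tCount_pos_rectangular
    (d r : ℕ) (l delta : YoungDiagram)
    (hcard : l.card = d * r)
    (hht : l.colLen 0 ≤ min (d ^ 2) (r ^ 2))
    (hdelta : ∀ i, delta.rowLen i = if i < r then d else 0) :
    0 < tCount l delta delta := by
  have hl : l.colLen 0 ≤ d * d := (sq d) ▸ hht.trans (min_le_left _ _)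
  have hP :=
    hasMarginals_latinPointSet hcard hl (YoungDiagram.colLen_eq_ite_of_rowLen_eq_ite hdelta)
  have : Finite {P // HasMarginals P l delta delta} :=
    (finite_setOf_hasMarginals l delta delta).to_subtype
  have : Nonempty {P // HasMarginals P l delta delta} := ⟨⟨_, hP⟩⟩
  exact Nat.card_pos

end KronPaper
end
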